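/- arXiv:2201.07918 — 9 statements merged into one kernel-verified Lean document; each statement's English description precedes it below -/
import Mathlib

section
/- Let S ⊆ H_A ⊗ H_{B1} be a completely entangled subspace (every nonzero vector is entangled) and let H_{B2} be any finite-dimensional Hilbert space. Then S ⊗ H_{B2}, viewed as a subspace of H_A ⊗ (H_{B1} ⊗ H_{B2}), is completely entangled with respect to the bipartition A | B1B2. -/
/-- Tensor product of vectors, in coordinates. -/
def tp {a b : Type*} (u : a → ℂ) (v : b → ℂ) : a × b → ℂ := fun p => u p.1 * v p.2

/-- A bipartite vector is a product vector if it is a tensor product of vectors. -/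
def IsProdVec {a b : Type*} (ψ : a × b → ℂ) : Prop := ∃ u v, ψ = tp u v

/-- A subspace of a bipartite space is completely entangled if every nonzero vector
in it is entangled. -/
def CES {a b : Type*} (S : Submodule ℂ (a × b → ℂ)) : Prop :=
  ∀ ψ ∈ S, ψ ≠ 0 → ¬ IsProdVec ψ

/-- If `S ⊆ H_A ⊗ H_{B1}` is completely entangled, then `S ⊗ H_{B2}`, viewed inside
`H_A ⊗ (H_{B1} ⊗ H_{B2})`, is completely entangled w.r.t. the bipartition `A | B1B2`. -/
theorem stmt3 {a b1 b2 : Type*} [Fintype a] [Fintype b1] [Fintype b2]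
    (S : Submodule ℂ (a × b1 → ℂ)) (hS : CES S) :
    CES (Submodule.span ℂ {w : a × (b1 × b2) → ℂ |
      ∃ s ∈ S, ∃ v : b2 → ℂ, w = fun p => s (p.1, p.2.1) * v p.2.2}) := by
  -- The submodule of vectors all of whose b2-slices lie in S
  set T : Submodule ℂ (a × (b1 × b2) → ℂ) :=
    { carrier := {w | ∀ z : b2, (fun p : a × b1 => w (p.1, (p.2, z))) ∈ S}
      add_mem' := by
        intro x y hx hy z
        exact S.add_mem (hx z) (hy z)
      zero_mem' := by
        intro z
        exact S.zero_mem
      smul_mem' := by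
        intro c x hx z
        exact S.smul_mem c (hx z) } with hT
  intro ψ hψ hne hprod
  have hsub : Submodule.span ℂ {w : a × (b1 × b2) → ℂ |
      ∃ s ∈ S, ∃ v : b2 → ℂ, w = fun p => s (p.1, p.2.1) * v p.2.2} ≤ T := by
    rw [Submodule.span_le]
    rintro w ⟨s, hs, v, rfl⟩ z
    have h := S.smul_mem (v z) hs
    have heq : (fun p : a × b1 => (fun p : a × (b1 × b2) => s (p.1, p.2.1) * v p.2.2) (p.1, (p.2, z))) = v z • s := by
      funext q
      simp [smul_eq_mul, mul_comm]
    rw [heq]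
    exact h
  have hslice : ∀ z : b2, (fun p : a × b1 => ψ (p.1, (p.2, z))) ∈ S := hsub hψ
  obtain ⟨u, V, rfl⟩ := hprod
  obtain ⟨p, hp⟩ : ∃ p, tp u V p ≠ 0 := by
    by_contra h
    push_neg at h
    exact hne (funext h)
  set z := p.2.2
  have hs0 : (fun q : a × b1 => tp u V (q.1, (q.2, z))) ≠ 0 := by
    intro h
    have := congrFun h (p.1, p.2.1)
    simp only [Pi.zero_apply] at this
    exact hp this
  exact hS _ (hslice z) hs0 ⟨u, fun y => V (y, z), rfl⟩
end

section
/- Let S^(1), …, S^(n) be completely entangled subspaces of H_A ⊗ H_{B1}, and let P^(1), …, P^(n) be mutually orthogonal subspaces of H_{B2}. Then the direct sum (S^(1) ⊗ P^(1)) ⊕ … ⊕ (S^(n) ⊗ P^(n)), viewed as a subspace of H_A ⊗ (H_{B1} ⊗ H_{B2}), is completely entangled with respect to the bipartition A | B1B2. -/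
/-- Partial inner product with `φ` in the `b2` slot. -/
noncomputable def Tmap {a b1 b2 : Type*} [Fintype b2] (φ : b2 → ℂ) :
    (a × (b1 × b2) → ℂ) →ₗ[ℂ] (a × b1 → ℂ) where
  toFun ψ := fun p => ∑ k, star (φ k) * ψ (p.1, (p.2, k))
  map_add' ψ χ := by
    funext p; simp [mul_add, Finset.sum_add_distrib]
  map_smul' c ψ := by
    funext p; simp [Finset.mul_sum, smul_eq_mul]; ring_nf
    exact Finset.sum_congr rfl fun k _ => by ring

/-- Slice map. -/
def slmap {a b1 b2 : Type*} (x : a) (y : b1) :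
    (a × (b1 × b2) → ℂ) →ₗ[ℂ] (b2 → ℂ) where
  toFun ψ := fun k => ψ (x, (y, k))
  map_add' ψ χ := rfl
  map_smul' c ψ := rfl

/-- If `S⁽¹⁾, …, S⁽ⁿ⁾ ⊆ H_A ⊗ H_{B1}` are completely entangled subspaces and
`P⁽¹⁾, …, P⁽ⁿ⁾ ⊆ H_{B2}` are mutually orthogonal subspaces, then the (direct) sum
`(S⁽¹⁾ ⊗ P⁽¹⁾) ⊕ … ⊕ (S⁽ⁿ⁾ ⊗ P⁽ⁿ⁾)`, viewed inside `H_A ⊗ (H_{B1} ⊗ H_{B2})`, is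
completely entangled w.r.t. the bipartition `A | B1B2`. -/
theorem stmt4 {a b1 b2 : Type*} [Fintype a] [Fintype b1] [Fintype b2] (n : ℕ)
    (S : Fin n → Submodule ℂ (a × b1 → ℂ)) (hS : ∀ j, CES (S j))
    (P : Fin n → Submodule ℂ (b2 → ℂ))
    (hP : ∀ i j, i ≠ j → ∀ u ∈ P i, ∀ v ∈ P j, ∑ k, star (u k) * v k = 0) :
    CES (Submodule.span ℂ {w : a × (b1 × b2) → ℂ |
      ∃ j, ∃ s ∈ S j, ∃ v ∈ P j, w = fun p => s (p.1, p.2.1) * v p.2.2}) := by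
  intro ψ hmem hne hprod
  obtain ⟨u, w, rfl⟩ := hprod
  set G : Set (a × (b1 × b2) → ℂ) := {w | ∃ j, ∃ s ∈ S j, ∃ v ∈ P j,
      w = fun p => s (p.1, p.2.1) * v p.2.2} with hG
  -- 1. Tmap φ (tp u w) ∈ S i for φ ∈ P i
  have hT : ∀ i : Fin n, ∀ φ ∈ P i, Tmap φ (tp u w) ∈ S i := by
    intro i φ hφ
    have hle : Submodule.span ℂ G ≤ (S i).comap (Tmap φ) := by
      rw [Submodule.span_le]
      rintro _ ⟨j, s, hs, v, hv, rfl⟩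
      simp only [SetLike.mem_coe, Submodule.mem_comap]
      have heq : Tmap φ (fun p => s (p.1, p.2.1) * v p.2.2)
          = (∑ k, star (φ k) * v k) • s := by
        funext p
        simp only [Tmap, LinearMap.coe_mk, AddHom.coe_mk, Pi.smul_apply, smul_eq_mul,
          Finset.sum_mul]
        exact Finset.sum_congr rfl fun k _ => by ring
      rw [heq]
      by_cases hij : j = i
      · subst hij; exact (S j).smul_mem _ hs
      · rw [hP i j (fun h => hij h.symm) φ hφ v hv, zero_smul]
        exact (S i).zero_mem
    exact hle hmem
  -- 2. Tmap φ (tp u w) is a product vector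
  have hTp : ∀ φ : b2 → ℂ, IsProdVec (Tmap φ (tp u w)) := by
    intro φ
    refine ⟨u, fun y => ∑ k, star (φ k) * w (y, k), ?_⟩
    funext p
    simp only [Tmap, tp, LinearMap.coe_mk, AddHom.coe_mk, Finset.mul_sum]
    exact Finset.sum_congr rfl fun k _ => by ring
  -- 3. therefore Tmap φ (tp u w) = 0 for φ ∈ P i
  have hT0 : ∀ i : Fin n, ∀ φ ∈ P i, Tmap φ (tp u w) = 0 := by
    intro i φ hφ
    by_contra h0
    exact hS i _ (hT i φ hφ) h0 (hTp φ)
  -- 4. slices are in ⨆ j, P j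
  have hsl : ∀ (x : a) (y : b1), slmap x y (tp u w) ∈ ⨆ j, P j := by
    intro x y
    have hle : Submodule.span ℂ G ≤ (⨆ j, P j).comap (slmap x y) := by
      rw [Submodule.span_le]
      rintro _ ⟨j, s, hs, v, hv, rfl⟩
      simp only [SetLike.mem_coe, Submodule.mem_comap]
      have heq : slmap x y (fun p : a × (b1 × b2) => s (p.1, p.2.1) * v p.2.2)
          = s (x, y) • v := by
        funext k; simp [slmap, smul_eq_mul]
      rw [heq]
      exact Submodule.smul_mem _ _ (Submodule.mem_iSup_of_mem j hv)
    exact hle hmem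
  -- 5. slice is orthogonal to everything in ⨆ j, P j
  have horth : ∀ (x : a) (y : b1), ∀ g ∈ ⨆ j, P j,
      ∑ k, star (g k) * (tp u w) (x, (y, k)) = 0 := by
    intro x y g hg
    induction hg using Submodule.iSup_induction' with
    | mem i φ hφ =>
      have := congrFun (hT0 i φ hφ) (x, y)
      simpa [Tmap] using this
    | zero => simp
    | add φ hφ χ hχ h1 h2 =>
      simp only [Pi.add_apply, star_add, add_mul, Finset.sum_add_distrib, h1, h2, add_zero]
  -- 6. the slice is zero
  have hzero : ∀ (x : a) (y : b1) (k : b2), (tp u w) (x, (y, k)) = 0 := by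
    intro x y
    have h := horth x y _ (hsl x y)
    have h2 : ∑ k, Complex.normSq ((tp u w) (x, (y, k))) = 0 := by
      have : ((∑ k, Complex.normSq ((tp u w) (x, (y, k))) : ℝ) : ℂ) = 0 := by
        rw [Complex.ofReal_sum]
        rw [← h]
        refine Finset.sum_congr rfl fun k _ => ?_
        simp [slmap, Complex.normSq_eq_conj_mul_self]
      exact_mod_cast this
    intro k
    have hnn : ∀ k ∈ Finset.univ, (0:ℝ) ≤ Complex.normSq ((tp u w) (x, (y, k))) :=
      fun k _ => Complex.normSq_nonneg _
    have := (Finset.sum_eq_zero_iff_of_nonneg hnn).mp h2 k (Finset.mem_univ k)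
    exact Complex.normSq_eq_zero.mp this
  apply hne
  funext p
  have := hzero p.1 p.2.1 p.2.2
  simpa using this
end

section
/- Let S ⊆ H_A ⊗ H_{B1} and G ⊆ H_{B2} ⊗ H_C be completely entangled subspaces. Then every nonzero vector of S ⊗ G, viewed inside H_A ⊗ (H_{B1} ⊗ H_{B2}) ⊗ H_C, is entangled across the bipartition A | (B1B2)C. -/
/-- If `S ⊆ H_A ⊗ H_{B1}` and `G ⊆ H_{B2} ⊗ H_C` are completely entangled subspaces,
then every nonzero vector of `S ⊗ G`, viewed inside
`H_A ⊗ ((H_{B1} ⊗ H_{B2}) ⊗ H_C)`, is entangled across the cut `A | (B1B2)C`. -/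
theorem stmt5 {a b1 b2 c : Type*} [Fintype a] [Fintype b1] [Fintype b2] [Fintype c]
    (S : Submodule ℂ (a × b1 → ℂ)) (hS : CES S)
    (G : Submodule ℂ (b2 × c → ℂ)) (hG : CES G) :
    ∀ ψ ∈ Submodule.span ℂ {w : a × ((b1 × b2) × c) → ℂ |
        ∃ s ∈ S, ∃ g ∈ G, w = fun p => s (p.1, p.2.1.1) * g (p.2.1.2, p.2.2)},
      ψ ≠ 0 → ¬ IsProdVec ψ := by
  intro ψ hψ hne hprod
  obtain ⟨u, v, rfl⟩ := hprod
  have hex : ∃ p, tp u v p ≠ 0 := by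
    by_contra h
    push_neg at h
    exact hne (funext h)
  obtain ⟨⟨x0, ⟨⟨x1, y0⟩, z0⟩⟩, hp⟩ := hex
  let L : (a × ((b1 × b2) × c) → ℂ) →ₗ[ℂ] (a × b1 → ℂ) :=
    { toFun := fun w q => w (q.1, ((q.2, y0), z0))
      map_add' := by intros; rfl
      map_smul' := by intros; rfl }
  have hmem : L (tp u v) ∈ S := by
    have hle : Submodule.span ℂ {w : a × ((b1 × b2) × c) → ℂ |
        ∃ s ∈ S, ∃ g ∈ G, w = fun p => s (p.1, p.2.1.1) * g (p.2.1.2, p.2.2)} ≤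
        S.comap L := by
      rw [Submodule.span_le]
      rintro w ⟨s, hs, g, hg, rfl⟩
      show L _ ∈ S
      have heq : L (fun p => s (p.1, p.2.1.1) * g (p.2.1.2, p.2.2)) = g (y0, z0) • s := by
        funext q
        simp [L, mul_comm]
      rw [heq]
      exact S.smul_mem _ hs
    exact hle hψ
  refine hS (L (tp u v)) hmem ?_ ⟨u, fun x1' => v ((x1', y0), z0), rfl⟩
  intro h
  exact hp (congrFun h (x0, x1))
end

section
/- Let S ⊆ H_A ⊗ H_{B1} and G ⊆ H_{B2} ⊗ H_C be completely entangled subspaces. Then every nonzero vector of S ⊗ G, viewed inside H_A ⊗ (H_{B1} ⊗ H_{B2}) ⊗ H_C, is genuinely entangled: it is entangled across each of the three bipartitions A|BC, B|AC, and C|AB, where B = B1B2. -/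
lemma slice1 {a b1 b2 c : Type*}
    (S : Submodule ℂ (a × b1 → ℂ)) (G : Submodule ℂ (b2 × c → ℂ))
    {ψ : a × (b1 × b2) × c → ℂ}
    (hψ : ψ ∈ Submodule.span ℂ {w : a × (b1 × b2) × c → ℂ |
        ∃ s ∈ S, ∃ g ∈ G, w = fun p => s (p.1, p.2.1.1) * g (p.2.1.2, p.2.2)})
    (y2 : b2) (z : c) :
    (fun p : a × b1 => ψ (p.1, (p.2, y2), z)) ∈ S := by
  induction hψ using Submodule.span_induction with
  | mem w hw =>
    obtain ⟨s, hs, g, hg, rfl⟩ := hw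
    have h : (fun p : a × b1 => s (p.1, p.2) * g (y2, z)) = g (y2, z) • s := by
      funext p; simp [smul_eq_mul, mul_comm]
    simpa [h] using S.smul_mem (g (y2, z)) hs
  | zero => exact S.zero_mem
  | add f g _ _ hf hg => exact S.add_mem hf hg
  | smul r f _ hf => exact S.smul_mem r hf

lemma slice2 {a b1 b2 c : Type*}
    (S : Submodule ℂ (a × b1 → ℂ)) (G : Submodule ℂ (b2 × c → ℂ))
    {ψ : a × (b1 × b2) × c → ℂ}
    (hψ : ψ ∈ Submodule.span ℂ {w : a × (b1 × b2) × c → ℂ |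
        ∃ s ∈ S, ∃ g ∈ G, w = fun p => s (p.1, p.2.1.1) * g (p.2.1.2, p.2.2)})
    (x : a) (y1 : b1) :
    (fun p : b2 × c => ψ (x, (y1, p.1), p.2)) ∈ G := by
  induction hψ using Submodule.span_induction with
  | mem w hw =>
    obtain ⟨s, hs, g, hg, rfl⟩ := hw
    have h : (fun p : b2 × c => s (x, y1) * g (p.1, p.2)) = s (x, y1) • g := by
      funext p; simp [smul_eq_mul]
    simpa [h] using G.smul_mem (s (x, y1)) hg
  | zero => exact G.zero_mem
  | add f g _ _ hf hg => exact G.add_mem hf hg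
  | smul r f _ hf => exact G.smul_mem r hf

/-- If `S ⊆ H_A ⊗ H_{B1}` and `G ⊆ H_{B2} ⊗ H_C` are completely entangled subspaces,
then every nonzero vector of `S ⊗ G`, viewed inside `H_A ⊗ (H_{B1} ⊗ H_{B2}) ⊗ H_C`,
is genuinely entangled: entangled across all three cuts `A|BC`, `B|AC`, `C|AB`. -/
theorem stmt6 {a b1 b2 c : Type*} [Fintype a] [Fintype b1] [Fintype b2] [Fintype c]
    (S : Submodule ℂ (a × b1 → ℂ)) (hS : CES S)
    (G : Submodule ℂ (b2 × c → ℂ)) (hG : CES G) :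
    ∀ ψ ∈ Submodule.span ℂ {w : a × (b1 × b2) × c → ℂ |
        ∃ s ∈ S, ∃ g ∈ G, w = fun p => s (p.1, p.2.1.1) * g (p.2.1.2, p.2.2)},
      ψ ≠ 0 →
      (¬ ∃ (u : a → ℂ) (v : (b1 × b2) × c → ℂ), ∀ x y z, ψ (x, y, z) = u x * v (y, z)) ∧
      (¬ ∃ (u : b1 × b2 → ℂ) (v : a × c → ℂ), ∀ x y z, ψ (x, y, z) = u y * v (x, z)) ∧
      (¬ ∃ (u : c → ℂ) (v : a × (b1 × b2) → ℂ), ∀ x y z, ψ (x, y, z) = u z * v (x, y)) := by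
  intro ψ hψ hne
  refine ⟨?_, ?_, ?_⟩
  · rintro ⟨u, v, huv⟩
    apply hne
    funext p
    obtain ⟨x, ⟨y1, y2⟩, z⟩ := p
    have hmem := slice1 S G hψ y2 z
    have hprod : IsProdVec (fun p : a × b1 => ψ (p.1, (p.2, y2), z)) :=
      ⟨u, fun w => v ((w, y2), z), by funext q; exact huv q.1 (q.2, y2) z⟩
    have h0 : (fun p : a × b1 => ψ (p.1, (p.2, y2), z)) = 0 := by
      by_contra h
      exact hS _ hmem h hprod
    exact congrFun h0 (x, y1)
  · rintro ⟨u, v, huv⟩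
    apply hne
    funext p
    obtain ⟨x, ⟨y1, y2⟩, z⟩ := p
    have hmem := slice1 S G hψ y2 z
    have hprod : IsProdVec (fun p : a × b1 => ψ (p.1, (p.2, y2), z)) :=
      ⟨fun w => v (w, z), fun w => u (w, y2), by
        funext q; rw [huv q.1 (q.2, y2) z]; exact mul_comm _ _⟩
    have h0 : (fun p : a × b1 => ψ (p.1, (p.2, y2), z)) = 0 := by
      by_contra h
      exact hS _ hmem h hprod
    exact congrFun h0 (x, y1)
  · rintro ⟨u, v, huv⟩
    apply hne
    funext p
    obtain ⟨x, ⟨y1, y2⟩, z⟩ := p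
    have hmem := slice2 S G hψ x y1
    have hprod : IsProdVec (fun p : b2 × c => ψ (x, (y1, p.1), p.2)) :=
      ⟨fun w => v (x, (y1, w)), u, by
        funext q; rw [huv x (y1, q.1) q.2]; exact mul_comm _ _⟩
    have h0 : (fun p : b2 × c => ψ (x, (y1, p.1), p.2)) = 0 := by
      by_contra h
      exact hG _ hmem h hprod
    exact congrFun h0 (y2, z)
end

section
/- Let W be a subspace of a multipartite Hilbert space with geometric measure of genuine entanglement G_GME(W) = min over unit vectors ψ ∈ W of G_GME(ψ), and let Π_W be the orthogonal projector onto W. If a density operator ρ satisfies Tr(ρ Π_W) + G_GME(W) − 1 > 0, then ρ is genuinely entangled, i.e., ρ is not a convex combination of projections onto biseparable pure states. -/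
open scoped ComplexOrder

/-- Largest eigenvalue of a Hermitian matrix, as the supremum of its quadratic form
over unit vectors. -/
noncomputable def lmax {m : Type*} [Fintype m] (ρ : Matrix m m ℂ) : ℝ :=
  sSup {r : ℝ | ∃ v : m → ℂ, (∑ i, Complex.normSq (v i)) = 1 ∧
    r = (dotProduct (star v) (ρ.mulVec v)).re}

/-- Merge configurations on the parties in `A` and its complement into a full
configuration. -/
def merge {n : ℕ} {d : Fin n → Type*} (A : Finset (Fin n))
    (x : ∀ i : {i // i ∈ A}, d i) (z : ∀ i : {i // i ∉ A}, d i) : ∀ i, d i :=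
  fun i => if h : i ∈ A then x ⟨i, h⟩ else z ⟨i, h⟩

/-- Largest squared Schmidt coefficient of `ψ` across the cut `A|Ā`. -/
noncomputable def lmaxCut {n : ℕ} {d : Fin n → Type*} [∀ i, Fintype (d i)]
    [∀ i, DecidableEq (d i)] (A : Finset (Fin n)) (ψ : (∀ i, d i) → ℂ) : ℝ :=
  lmax (Matrix.of fun x y : ∀ i : {i // i ∈ A}, d i =>
    ∑ z : ∀ i : {i // i ∉ A}, d i, ψ (merge A x z) * star (ψ (merge A y z)))

/-- `ψ` factorizes as a product across the bipartite cut `A|Ā`. -/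
def ProdAcross {n : ℕ} {d : Fin n → Type*} (A : Finset (Fin n)) (ψ : (∀ i, d i) → ℂ) :
    Prop :=
  ∃ (u : (∀ i : {i // i ∈ A}, d i) → ℂ) (v : (∀ i : {i // i ∉ A}, d i) → ℂ),
    ∀ x : ∀ i, d i, ψ x = u (fun i => x i) * v (fun i => x i)

/-- A pure state is biseparable if it is a product across some nontrivial bipartite cut. -/
def Bisep {n : ℕ} {d : Fin n → Type*} (ψ : (∀ i, d i) → ℂ) : Prop :=
  ∃ A : Finset (Fin n), A.Nonempty ∧ A ≠ Finset.univ ∧ ProdAcross A ψ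

/-- Geometric measure of genuine multipartite entanglement of a pure state. -/
noncomputable def GGME {n : ℕ} {d : Fin n → Type*} [∀ i, Fintype (d i)]
    [∀ i, DecidableEq (d i)] (ψ : (∀ i, d i) → ℂ) : ℝ :=
  sInf {r : ℝ | ∃ A : Finset (Fin n), A.Nonempty ∧ A ≠ Finset.univ ∧
    r = 1 - lmaxCut A ψ}

/-- Geometric measure of genuine entanglement of a subspace: that of its least
entangled unit vector. -/
noncomputable def GGMEsub {n : ℕ} {d : Fin n → Type*} [∀ i, Fintype (d i)]
    [∀ i, DecidableEq (d i)] (W : Submodule ℂ ((∀ i, d i) → ℂ)) : ℝ :=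
  sInf {r : ℝ | ∃ ψ ∈ W, (∑ x, Complex.normSq (ψ x)) = 1 ∧ r = GGME ψ}

/-- Rank-one projector `|ψ⟩⟨ψ|`. -/
def proj {m : Type*} (ψ : m → ℂ) : Matrix m m ℂ := Matrix.of fun i j => ψ i * star (ψ j)

/-!
A biseparable unit vector `φ` is a product `u ⊗ v` across some cut `A|Ā`. By Cauchy–Schwarz in
the `Ā` factor, `|⟨φ|ψ⟩|²` is at most the Rayleigh quotient of `u` for the reduced state of `ψ`
on `A`, hence at most `lmaxCut A ψ ≤ 1 - G_GME(ψ) ≤ 1 - G_GME(W)` for a unit vector `ψ ∈ W`.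
Taking `ψ = Π_W φ / ‖Π_W φ‖` gives `⟨φ|Π_W|φ⟩ = ‖Π_W φ‖² ≤ 1 - G_GME(W)`, and averaging over a
decomposition `ρ = ∑ pₖ |φₖ⟩⟨φₖ|` gives `Tr(ρ Π_W) ≤ 1 - G_GME(W)`.
-/

open Matrix

lemma normSq_star_dotProduct_le {ι : Type*} [Fintype ι] (f g : ι → ℂ) :
    Complex.normSq (star f ⬝ᵥ g) ≤
      (∑ i, Complex.normSq (f i)) * ∑ i, Complex.normSq (g i) := by
  have h := norm_inner_le_norm (𝕜 := ℂ) (WithLp.toLp 2 f : EuclideanSpace ℂ ι) (WithLp.toLp 2 g)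
  rw [EuclideanSpace.inner_eq_star_dotProduct] at h
  have h2 := pow_le_pow_left₀ (norm_nonneg _) h 2
  rw [mul_pow, EuclideanSpace.norm_sq_eq, EuclideanSpace.norm_sq_eq] at h2
  simpa [Complex.sq_norm, dotProduct, mul_comm] using h2

lemma sum_normSq_smul {ι : Type*} [Fintype ι] (a : ℂ) (f : ι → ℂ) :
    ∑ i, Complex.normSq ((a • f) i) = Complex.normSq a * ∑ i, Complex.normSq (f i) := by
  simp only [Pi.smul_apply, smul_eq_mul, Complex.normSq_mul, Finset.mul_sum]

lemma star_dotProduct_self_eq_sum_normSq {ι : Type*} [Fintype ι] (f : ι → ℂ) :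
    star f ⬝ᵥ f = ((∑ i, Complex.normSq (f i) : ℝ) : ℂ) := by
  simp only [dotProduct, Pi.star_apply, Complex.ofReal_sum, Complex.normSq_eq_conj_mul_self,
    Complex.star_def]

section lmax

variable {m : Type*} [Fintype m] (ρ : Matrix m m ℂ)

lemma le_lmax {v : m → ℂ} (hv : ∑ i, Complex.normSq (v i) = 1)
    (hρ : BddAbove {r : ℝ | ∃ v : m → ℂ, (∑ i, Complex.normSq (v i)) = 1 ∧
      r = (star v ⬝ᵥ ρ *ᵥ v).re}) :
    (star v ⬝ᵥ ρ *ᵥ v).re ≤ lmax ρ :=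
  le_csSup hρ ⟨v, hv, rfl⟩

lemma lmax_le {c : ℝ} (hc : 0 ≤ c)
    (h : ∀ v : m → ℂ, ∑ i, Complex.normSq (v i) = 1 → (star v ⬝ᵥ ρ *ᵥ v).re ≤ c) :
    lmax ρ ≤ c :=
  Real.sSup_le (by rintro _ ⟨v, hv, rfl⟩; exact h v hv) hc

lemma lmax_nonneg
    (h : ∀ v : m → ℂ, ∑ i, Complex.normSq (v i) = 1 → 0 ≤ (star v ⬝ᵥ ρ *ᵥ v).re) :
    0 ≤ lmax ρ :=
  Real.sSup_nonneg (by rintro _ ⟨v, hv, rfl⟩; exact h v hv)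

end lmax

section Cut

variable {n : ℕ} {d : Fin n → Type*} (A : Finset (Fin n))

@[simp]
lemma merge_apply_of_mem (x : ∀ i : {i // i ∈ A}, d i) (z : ∀ i : {i // i ∉ A}, d i)
    (i : {i // i ∈ A}) : merge A x z i = x i := by
  simp [merge, i.2]

@[simp]
lemma merge_apply_of_notMem (x : ∀ i : {i // i ∈ A}, d i) (z : ∀ i : {i // i ∉ A}, d i)
    (i : {i // i ∉ A}) : merge A x z i = z i := by
  simp [merge, i.2]

variable [∀ i, Fintype (d i)]

lemma sum_merge {M : Type*} [AddCommMonoid M] (f : (∀ i, d i) → M) :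
    ∑ w, f w = ∑ x : ∀ i : {i // i ∈ A}, d i, ∑ z : ∀ i : {i // i ∉ A}, d i,
      f (merge A x z) := by
  rw [← (Equiv.piEquivPiSubtypeProd (· ∈ A) d).symm.sum_comp f, Fintype.sum_prod_type]
  rfl

lemma ProdAcross.exists_normalized {φ : (∀ i, d i) → ℂ} (h : ProdAcross A φ)
    (hφ : ∑ w, Complex.normSq (φ w) = 1) :
    ∃ (u : (∀ i : {i // i ∈ A}, d i) → ℂ) (v : (∀ i : {i // i ∉ A}, d i) → ℂ),
      ∑ x, Complex.normSq (u x) = 1 ∧ ∑ z, Complex.normSq (v z) = 1 ∧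
      ∀ x z, φ (merge A x z) = u x * v z := by
  obtain ⟨u, v, huv⟩ := h
  have hφuv : ∀ x z, φ (merge A x z) = u x * v z := fun x z => by simp [huv]
  have hab : (∑ x, Complex.normSq (u x)) * ∑ z, Complex.normSq (v z) = 1 := by
    simp [← hφ, sum_merge A, Finset.sum_mul_sum, hφuv]
  have ha : 0 < ∑ x, Complex.normSq (u x) := by
    refine (Finset.sum_nonneg fun _ _ => Complex.normSq_nonneg _).lt_of_ne fun h => ?_
    rw [← h, zero_mul] at hab
    exact zero_ne_one hab
  set a := ∑ x, Complex.normSq (u x)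
  refine ⟨((√a : ℝ) : ℂ)⁻¹ • u, ((√a : ℝ) : ℂ) • v, ?_, ?_, fun x z => ?_⟩
  · rw [sum_normSq_smul, Complex.normSq_inv, Complex.normSq_ofReal, Real.mul_self_sqrt ha.le]
    exact inv_mul_cancel₀ ha.ne'
  · rw [sum_normSq_smul, Complex.normSq_ofReal, Real.mul_self_sqrt ha.le, hab]
  · simp only [hφuv, Pi.smul_apply, smul_eq_mul]
    field_simp

/-- The reduced state `Tr_Ā |ψ⟩⟨ψ|` on the parties in `A`; `lmaxCut A ψ` is its `lmax`. -/
def reducedState (ψ : (∀ i, d i) → ℂ) :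
    Matrix (∀ i : {i // i ∈ A}, d i) (∀ i : {i // i ∈ A}, d i) ℂ :=
  Matrix.of fun x y => ∑ z : ∀ i : {i // i ∉ A}, d i, ψ (merge A x z) * star (ψ (merge A y z))

lemma star_dotProduct_reducedState_mulVec (ψ : (∀ i, d i) → ℂ)
    (u : (∀ i : {i // i ∈ A}, d i) → ℂ) :
    star u ⬝ᵥ reducedState A ψ *ᵥ u =
      ((∑ z : ∀ i : {i // i ∉ A}, d i,
        Complex.normSq (star u ⬝ᵥ fun x => ψ (merge A x z)) : ℝ) : ℂ) := by
  simp only [Complex.ofReal_sum, ← Complex.mul_conj, map_sum, map_mul,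
    Complex.conj_conj, Finset.sum_mul, Finset.mul_sum, dotProduct, mulVec, reducedState,
    of_apply, Pi.star_apply, Complex.star_def]
  refine (Finset.sum_congr rfl fun x _ => Finset.sum_comm).trans (Finset.sum_comm.trans ?_)
  refine Finset.sum_congr rfl fun z _ => Finset.sum_comm.trans ?_
  refine Finset.sum_congr rfl fun y _ => Finset.sum_congr rfl fun x _ => ?_
  ring

lemma re_star_dotProduct_reducedState_mulVec_le (ψ : (∀ i, d i) → ℂ)
    {u : (∀ i : {i // i ∈ A}, d i) → ℂ} (hu : ∑ x, Complex.normSq (u x) = 1) :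
    (star u ⬝ᵥ reducedState A ψ *ᵥ u).re ≤ ∑ w, Complex.normSq (ψ w) := by
  rw [star_dotProduct_reducedState_mulVec, Complex.ofReal_re, sum_merge A, Finset.sum_comm]
  refine Finset.sum_le_sum fun z _ => ?_
  simpa [hu] using normSq_star_dotProduct_le u (fun x => ψ (merge A x z))

variable [∀ i, DecidableEq (d i)]

lemma lmaxCut_nonneg (ψ : (∀ i, d i) → ℂ) : 0 ≤ lmaxCut A ψ :=
  lmax_nonneg (reducedState A ψ) fun u _ => by
    rw [star_dotProduct_reducedState_mulVec, Complex.ofReal_re]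
    exact Finset.sum_nonneg fun _ _ => Complex.normSq_nonneg _

lemma lmaxCut_le (ψ : (∀ i, d i) → ℂ) : lmaxCut A ψ ≤ ∑ w, Complex.normSq (ψ w) :=
  lmax_le (reducedState A ψ) (Finset.sum_nonneg fun _ _ => Complex.normSq_nonneg _)
    fun _ hu => re_star_dotProduct_reducedState_mulVec_le A ψ hu

lemma re_star_dotProduct_reducedState_mulVec_le_lmaxCut (ψ : (∀ i, d i) → ℂ)
    {u : (∀ i : {i // i ∈ A}, d i) → ℂ} (hu : ∑ x, Complex.normSq (u x) = 1) :
    (star u ⬝ᵥ reducedState A ψ *ᵥ u).re ≤ lmaxCut A ψ :=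
  le_lmax (reducedState A ψ) hu
    ⟨_, by rintro _ ⟨v, hv, rfl⟩; exact re_star_dotProduct_reducedState_mulVec_le A ψ hv⟩

lemma normSq_inner_le_lmaxCut {φ : (∀ i, d i) → ℂ} (hprod : ProdAcross A φ)
    (hφ : ∑ w, Complex.normSq (φ w) = 1) (ψ : (∀ i, d i) → ℂ) :
    Complex.normSq (star φ ⬝ᵥ ψ) ≤ lmaxCut A ψ := by
  obtain ⟨u, v, hu, hv, hφuv⟩ := hprod.exists_normalized A hφ
  have hsplit : star φ ⬝ᵥ ψ = star v ⬝ᵥ fun z => star u ⬝ᵥ fun x => ψ (merge A x z) := by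
    simp only [dotProduct, Pi.star_apply]
    rw [sum_merge A, Finset.sum_comm]
    refine Finset.sum_congr rfl fun z _ => ?_
    simp only [hφuv, Finset.mul_sum, star_mul']
    exact Finset.sum_congr rfl fun x _ => by ring
  rw [hsplit]
  calc Complex.normSq (star v ⬝ᵥ fun z => star u ⬝ᵥ fun x => ψ (merge A x z))
      ≤ ∑ z, Complex.normSq (star u ⬝ᵥ fun x => ψ (merge A x z)) := by
        simpa [hv] using normSq_star_dotProduct_le v _
    _ ≤ lmaxCut A ψ := by
        simpa [star_dotProduct_reducedState_mulVec] using
          re_star_dotProduct_reducedState_mulVec_le_lmaxCut A ψ hu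

end Cut

section GGME

variable {n : ℕ} {d : Fin n → Type*} [∀ i, Fintype (d i)] [∀ i, DecidableEq (d i)]
  {ψ : (∀ i, d i) → ℂ}

lemma GGME_le_one_sub_lmaxCut {A : Finset (Fin n)} (hA : A.Nonempty) (hA' : A ≠ Finset.univ) :
    GGME ψ ≤ 1 - lmaxCut A ψ := by
  refine csInf_le (((Set.finite_range fun B => 1 - lmaxCut B ψ).subset ?_).bddBelow)
    ⟨A, hA, hA', rfl⟩
  rintro _ ⟨B, -, -, rfl⟩
  exact ⟨B, rfl⟩

lemma GGME_nonneg (hψ : ∑ w, Complex.normSq (ψ w) = 1) : 0 ≤ GGME ψ :=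
  Real.sInf_nonneg <| by
    rintro _ ⟨A, -, -, rfl⟩
    linarith [lmaxCut_le A ψ]

variable {W : Submodule ℂ ((∀ i, d i) → ℂ)}

lemma GGMEsub_le_GGME (hψW : ψ ∈ W) (hψ : ∑ w, Complex.normSq (ψ w) = 1) :
    GGMEsub W ≤ GGME ψ :=
  csInf_le ⟨0, by rintro _ ⟨ψ', -, hψ', rfl⟩; exact GGME_nonneg hψ'⟩ ⟨ψ, hψW, hψ, rfl⟩

lemma GGMEsub_le_one {A : Finset (Fin n)} (hA : A.Nonempty) (hA' : A ≠ Finset.univ) :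
    GGMEsub W ≤ 1 := by
  rcases Set.eq_empty_or_nonempty
    {r : ℝ | ∃ ψ ∈ W, (∑ x, Complex.normSq (ψ x)) = 1 ∧ r = GGME ψ} with hW | ⟨_, ψ, hψW, hψ, rfl⟩
  · rw [GGMEsub, hW, Real.sInf_empty]
    exact zero_le_one
  · linarith [GGMEsub_le_GGME hψW hψ, GGME_le_one_sub_lmaxCut (ψ := ψ) hA hA', lmaxCut_nonneg A ψ]

lemma normSq_inner_le_one_sub_GGMEsub {φ : (∀ i, d i) → ℂ} (hφ : ∑ w, Complex.normSq (φ w) = 1)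
    (hbisep : Bisep φ) (hψW : ψ ∈ W) (hψ : ∑ w, Complex.normSq (ψ w) = 1) :
    Complex.normSq (star φ ⬝ᵥ ψ) ≤ 1 - GGMEsub W := by
  obtain ⟨A, hA, hA', hprod⟩ := hbisep
  linarith [normSq_inner_le_lmaxCut A hprod hφ ψ, GGME_le_one_sub_lmaxCut (ψ := ψ) hA hA',
    GGMEsub_le_GGME hψW hψ]

lemma re_star_dotProduct_mulVec_le_one_sub_GGMEsub {P : Matrix (∀ i, d i) (∀ i, d i) ℂ}
    (hP : P.IsHermitian) (hPP : P * P = P) (hPW : ∀ ψ, P *ᵥ ψ = ψ → ψ ∈ W)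
    {φ : (∀ i, d i) → ℂ} (hφ : ∑ w, Complex.normSq (φ w) = 1) (hbisep : Bisep φ) :
    (star φ ⬝ᵥ P *ᵥ φ).re ≤ 1 - GGMEsub W := by
  set ψ := P *ᵥ φ
  have hψW : ψ ∈ W := hPW ψ (by rw [mulVec_mulVec, hPP])
  set c := ∑ w, Complex.normSq (ψ w)
  have hc : star φ ⬝ᵥ ψ = (c : ℂ) :=
    calc star φ ⬝ᵥ P *ᵥ φ = star φ ⬝ᵥ P *ᵥ ψ := by rw [mulVec_mulVec, hPP]
      _ = star ψ ⬝ᵥ ψ := by rw [dotProduct_mulVec, star_mulVec, hP.eq]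
      _ = c := star_dotProduct_self_eq_sum_normSq ψ
  rw [hc, Complex.ofReal_re]
  rcases le_or_gt c 0 with hc0 | hc0
  · obtain ⟨A, hA, hA', -⟩ := hbisep
    linarith [GGMEsub_le_one (W := W) hA hA']
  · have hunit : ∑ w, Complex.normSq ((((√c : ℝ) : ℂ)⁻¹ • ψ) w) = 1 := by
      rw [sum_normSq_smul, Complex.normSq_inv, Complex.normSq_ofReal, Real.mul_self_sqrt hc0.le]
      exact inv_mul_cancel₀ hc0.ne'
    have hover := normSq_inner_le_one_sub_GGMEsub hφ hbisep (W.smul_mem _ hψW) hunit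
    rwa [dotProduct_smul, hc, smul_eq_mul, Complex.normSq_mul, Complex.normSq_inv,
      Complex.normSq_ofReal, Complex.normSq_ofReal, Real.mul_self_sqrt hc0.le,
      inv_mul_cancel_left₀ hc0.ne'] at hover

end GGME

lemma trace_proj_mul {m : Type*} [Fintype m] (φ : m → ℂ) (P : Matrix m m ℂ) :
    (proj φ * P).trace = star φ ⬝ᵥ P *ᵥ φ := by
  rw [show proj φ = vecMulVec φ (star φ) from rfl, vecMulVec_mul, trace_vecMulVec,
    dotProduct_comm, dotProduct_mulVec]

theorem stmt8_general {n : ℕ} {d : Fin n → Type*} [∀ i, Fintype (d i)] [∀ i, DecidableEq (d i)]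
    (W : Submodule ℂ ((∀ i, d i) → ℂ))
    (PW ρ : Matrix (∀ i, d i) (∀ i, d i) ℂ)
    (hPherm : PW.IsHermitian) (hPidem : PW * PW = PW)
    (hPrange : ∀ ψ : (∀ i, d i) → ℂ, ψ ∈ W ↔ PW.mulVec ψ = ψ)
    (h : ((ρ * PW).trace).re + GGMEsub W - 1 > 0) :
    ¬ ∃ (m : ℕ) (p : Fin m → ℝ) (φ : Fin m → ((∀ i, d i) → ℂ)),
        (∀ k, 0 ≤ p k) ∧ (∑ k, p k = 1) ∧
        (∀ k, (∑ x, Complex.normSq (φ k x)) = 1 ∧ Bisep (φ k)) ∧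
        ρ = ∑ k, (p k : ℂ) • proj (φ k) := by
  rintro ⟨m, p, φ, hp, hpsum, hφ, rfl⟩
  have hexp : ((∑ k, (p k : ℂ) • proj (φ k)) * PW).trace.re =
      ∑ k, p k * (star (φ k) ⬝ᵥ PW *ᵥ φ k).re := by
    simp only [Finset.sum_mul, trace_sum, smul_mul, trace_smul, trace_proj_mul, Complex.re_sum,
      smul_eq_mul, Complex.re_ofReal_mul]
  have hbound : ∑ k, p k * (star (φ k) ⬝ᵥ PW *ᵥ φ k).re ≤ 1 - GGMEsub W :=
    calc ∑ k, p k * (star (φ k) ⬝ᵥ PW *ᵥ φ k).re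
        ≤ ∑ k, p k * (1 - GGMEsub W) := Finset.sum_le_sum fun k _ =>
          mul_le_mul_of_nonneg_left (re_star_dotProduct_mulVec_le_one_sub_GGMEsub hPherm hPidem
            (fun ψ => (hPrange ψ).2) (hφ k).1 (hφ k).2) (hp k)
      _ = 1 - GGMEsub W := by rw [← Finset.sum_mul, hpsum, one_mul]
  linarith

/-- If `Tr(ρ Π_W) + G_GME(W) − 1 > 0` for the orthogonal projector `Π_W` onto a
subspace `W`, then `ρ` is genuinely entangled: it is not a convex combination of
projections onto biseparable pure states. -/
theorem stmt8 {n : ℕ} {d : Fin n → Type*} [∀ i, Fintype (d i)] [∀ i, DecidableEq (d i)]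
    (W : Submodule ℂ ((∀ i, d i) → ℂ))
    (PW ρ : Matrix (∀ i, d i) (∀ i, d i) ℂ)
    (hPherm : PW.IsHermitian) (hPidem : PW * PW = PW)
    (hPrange : ∀ ψ : (∀ i, d i) → ℂ, ψ ∈ W ↔ PW.mulVec ψ = ψ)
    (hρ : ρ.PosSemidef) (hρtr : ρ.trace = 1)
    (h : ((ρ * PW).trace).re + GGMEsub W - 1 > 0) :
    ¬ ∃ (m : ℕ) (p : Fin m → ℝ) (φ : Fin m → ((∀ i, d i) → ℂ)),
        (∀ k, 0 ≤ p k) ∧ (∑ k, p k = 1) ∧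
        (∀ k, (∑ x, Complex.normSq (φ k x)) = 1 ∧ Bisep (φ k)) ∧
        ρ = ∑ k, (p k : ℂ) • proj (φ k) :=
  stmt8_general W PW ρ hPherm hPidem hPrange h
end

section
/- The subspace S of C^{d1} ⊗ C^{d2} spanned by the vectors |j⟩|k+1⟩ − |j+1⟩|k⟩ for 0 ≤ j ≤ d1−2, 0 ≤ k ≤ d2−2 has dimension (d1−1)(d2−1). -/
/-- The subspace of `ℂ^{d1} ⊗ ℂ^{d2}` spanned by the vectors
`|j⟩|k+1⟩ − |j+1⟩|k⟩`, `0 ≤ j ≤ d1−2`, `0 ≤ k ≤ d2−2`, has dimension `(d1−1)(d2−1)`. -/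
theorem stmt13 (d1 d2 : ℕ) (h1 : 2 ≤ d1) (h2 : 2 ≤ d2) :
    Module.finrank ℂ (Submodule.span ℂ
      (Set.range fun jk : Fin (d1 - 1) × Fin (d2 - 1) =>
        (fun p : Fin d1 × Fin d2 =>
          (if p.1.1 = jk.1.1 ∧ p.2.1 = jk.2.1 + 1 then (1 : ℂ) else 0)
          - (if p.1.1 = jk.1.1 + 1 ∧ p.2.1 = jk.2.1 then (1 : ℂ) else 0)))) =
      (d1 - 1) * (d2 - 1) := by
  set v : Fin (d1 - 1) × Fin (d2 - 1) → (Fin d1 × Fin d2 → ℂ) := fun jk p =>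
    (if p.1.1 = jk.1.1 ∧ p.2.1 = jk.2.1 + 1 then (1 : ℂ) else 0)
    - (if p.1.1 = jk.1.1 + 1 ∧ p.2.1 = jk.2.1 then (1 : ℂ) else 0) with hv
  have hli : LinearIndependent ℂ v := by
    rw [Fintype.linearIndependent_iff]
    intro g hg
    have E : ∀ (a : Fin d1) (b : Fin d2),
        ∑ x : Fin (d1 - 1) × Fin (d2 - 1), g x *
          ((if a.1 = x.1.1 ∧ b.1 = x.2.1 + 1 then (1 : ℂ) else 0)
           - (if a.1 = x.1.1 + 1 ∧ b.1 = x.2.1 then (1 : ℂ) else 0)) = 0 := by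
      intro a b
      have := congrFun hg (a, b)
      simpa [hv, Finset.sum_apply, mul_sub] using this
    have key : ∀ (j : Fin (d1 - 1)) (k : Fin (d2 - 1)), g (j, k) =
        if h : 1 ≤ j.1 ∧ k.1 + 1 < d2 - 1
        then g (⟨j.1 - 1, lt_of_le_of_lt (Nat.sub_le _ _) j.2⟩, ⟨k.1 + 1, h.2⟩)
        else 0 := by
      intro j k
      have hE := E ⟨j.1, lt_of_lt_of_le j.2 (Nat.sub_le d1 1)⟩
                   ⟨k.1 + 1, by omega⟩
      simp only [mul_sub] at hE
      rw [Finset.sum_sub_distrib] at hE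
      have hS1 : ∑ x : Fin (d1 - 1) × Fin (d2 - 1), g x *
          (if j.1 = x.1.1 ∧ k.1 + 1 = x.2.1 + 1 then (1 : ℂ) else 0) = g (j, k) := by
        rw [Finset.sum_eq_single (j, k)]
        · simp
        · intro x _ hx
          rw [if_neg, mul_zero]
          rintro ⟨ha, hb⟩
          exact hx (by apply Prod.ext <;> apply Fin.ext <;> simp <;> omega)
        · simp
      rw [hS1] at hE
      split_ifs with h
      · have hS2 : ∑ x : Fin (d1 - 1) × Fin (d2 - 1), g x *
            (if j.1 = x.1.1 + 1 ∧ k.1 + 1 = x.2.1 then (1 : ℂ) else 0) =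
            g (⟨j.1 - 1, lt_of_le_of_lt (Nat.sub_le _ _) j.2⟩, ⟨k.1 + 1, h.2⟩) := by
          rw [Finset.sum_eq_single (⟨j.1 - 1, lt_of_le_of_lt (Nat.sub_le _ _) j.2⟩,
              (⟨k.1 + 1, h.2⟩ : Fin (d2 - 1)))]
          · rw [if_pos, mul_one]
            constructor <;> simp <;> omega
          · intro x _ hx
            rw [if_neg, mul_zero]
            rintro ⟨ha, hb⟩
            exact hx (by apply Prod.ext <;> apply Fin.ext <;> simp <;> omega)
          · simp
        rw [hS2] at hE
        exact sub_eq_zero.mp hE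
      · have hS2 : ∑ x : Fin (d1 - 1) × Fin (d2 - 1), g x *
            (if j.1 = x.1.1 + 1 ∧ k.1 + 1 = x.2.1 then (1 : ℂ) else 0) = 0 := by
          apply Finset.sum_eq_zero
          intro x _
          rw [if_neg, mul_zero]
          rintro ⟨ha, hb⟩
          have := x.2.2
          omega
        rw [hS2, sub_zero] at hE
        exact hE
    intro i
    obtain ⟨j, k⟩ := i
    have main : ∀ m : ℕ, ∀ (j : Fin (d1 - 1)) (k : Fin (d2 - 1)), j.1 = m →
        g (j, k) = 0 := by
      intro m
      induction m with
      | zero =>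
        intro j k hj
        rw [key]
        rw [dif_neg]
        omega
      | succ m ih =>
        intro j k hj
        rw [key]
        split_ifs with h
        · exact ih _ _ (by simp; omega)
        · rfl
    exact main j.1 j k rfl
  rw [finrank_span_eq_card hli]
  simp
end

section
/- Let V1, …, Vk be pairwise orthogonal unit vectors in a bipartite Hilbert space H_A ⊗ H_B such that Σ_{i=1}^k G(ψ_i) − (k−1) > 0, where G(ψ_i) = 1 − (largest squared Schmidt coefficient of ψ_i). Then the subspace spanned by ψ_1, …, ψ_k is completely entangled: every nonzero vector in the span is entangled. -/
/-- Partial trace over the second tensor factor. -/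
noncomputable def ptrace₂ {a b : Type*} [Fintype b] (ρ : Matrix (a × b) (a × b) ℂ) :
    Matrix a a ℂ := Matrix.of fun i j => ∑ k, ρ (i, k) (j, k)

open Matrix WithLp

theorem Orthonormal.norm_sq_eq_sum_norm_inner_sq {𝕜 E ι : Type*} [RCLike 𝕜]
    [NormedAddCommGroup E] [InnerProductSpace 𝕜 E] [Fintype ι] {v : ι → E}
    (hv : Orthonormal 𝕜 v) {x : E} (hx : x ∈ Submodule.span 𝕜 (Set.range v)) :
    ‖x‖ ^ 2 = ∑ i, ‖inner 𝕜 (v i) x‖ ^ 2 := by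
  obtain ⟨c, rfl⟩ := (Submodule.mem_span_range_iff_exists_fun 𝕜).1 hx
  have h := hv.inner_sum c c Finset.univ
  simp_rw [inner_self_eq_norm_sq_to_K, RCLike.conj_mul] at h
  simp_rw [hv.inner_right_fintype]
  exact_mod_cast h

section Lmax
variable {m : Type*} [Fintype m]

lemma sum_normSq_eq_norm_toLp_sq (v : m → ℂ) :
    ∑ i, Complex.normSq (v i) = ‖toLp 2 v‖ ^ 2 := by
  simp [EuclideanSpace.norm_sq_eq, Complex.sq_norm]

lemma re_star_dotProduct_mulVec_eq_reApplyInnerSelf [DecidableEq m] (ρ : Matrix m m ℂ)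
    (v : m → ℂ) :
    (star v ⬝ᵥ ρ *ᵥ v).re = (toEuclideanCLM (𝕜 := ℂ) ρ).reApplyInnerSelf (toLp 2 v) := by
  rw [ContinuousLinearMap.reApplyInnerSelf_apply, toEuclideanCLM_toLp,
    EuclideanSpace.inner_toLp_toLp, ← Complex.conj_re, ← Complex.star_def, star_dotProduct,
    star_star, dotProduct_comm]
  rfl

lemma re_star_dotProduct_mulVec_le_lmax (ρ : Matrix m m ℂ) (u : m → ℂ) :
    (star u ⬝ᵥ ρ *ᵥ u).re ≤ ‖toLp 2 u‖ ^ 2 * lmax ρ := by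
  classical
  set T := toEuclideanCLM (𝕜 := ℂ) ρ
  have hbdd : BddAbove {r : ℝ | ∃ v : m → ℂ, (∑ i, Complex.normSq (v i)) = 1 ∧
      r = (star v ⬝ᵥ ρ *ᵥ v).re} := by
    refine ⟨‖T‖, ?_⟩
    rintro r ⟨v, hv, rfl⟩
    have := (le_abs_self _).trans (T.rayleighQuotient_le_norm (toLp 2 v))
    rwa [ContinuousLinearMap.rayleighQuotient, ← sum_normSq_eq_norm_toLp_sq, hv, div_one,
      ← re_star_dotProduct_mulVec_eq_reApplyInnerSelf] at this
  rcases eq_or_ne u 0 with rfl | hu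
  · simp
  have hpos : 0 < ‖toLp 2 u‖ := by simpa using hu
  set w : EuclideanSpace ℂ m := ((‖toLp 2 u‖⁻¹ : ℝ) : ℂ) • toLp 2 u
  have hw : ∑ i, Complex.normSq (ofLp w i) = 1 := by
    rw [sum_normSq_eq_norm_toLp_sq, toLp_ofLp, norm_smul]
    simp [hpos.ne']
  have := le_csSup hbdd ⟨ofLp w, hw, rfl⟩
  rwa [re_star_dotProduct_mulVec_eq_reApplyInnerSelf, toLp_ofLp,
    ContinuousLinearMap.reApplyInnerSelf_smul, ← re_star_dotProduct_mulVec_eq_reApplyInnerSelf,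
    Complex.norm_real, Real.norm_of_nonneg (inv_nonneg.2 hpos.le), inv_pow,
    inv_mul_le_iff₀ (by positivity)] at this

end Lmax

section Bipartite
variable {a b : Type*} [Fintype b]

lemma ptrace₂_proj (ψ : a × b → ℂ) :
    ptrace₂ (proj ψ) = of (Function.curry ψ) * (of (Function.curry ψ))ᴴ := by
  ext i j
  simp [ptrace₂, proj, mul_apply]

variable [Fintype a]

lemma star_dotProduct_ptrace₂_proj_mulVec (ψ : a × b → ℂ) (u : a → ℂ) :
    star u ⬝ᵥ ptrace₂ (proj ψ) *ᵥ u = (‖toLp 2 (star u ᵥ* of (Function.curry ψ))‖ ^ 2 : ℝ) := by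
  have h := inner_self_eq_norm_sq_to_K (𝕜 := ℂ) (toLp 2 (star u ᵥ* of (Function.curry ψ)))
  rw [EuclideanSpace.inner_toLp_toLp, star_vecMul, star_star, ← dotProduct_mulVec,
    mulVec_mulVec, ← ptrace₂_proj] at h
  exact_mod_cast h

lemma inner_toLp_tp (ψ : a × b → ℂ) (u : a → ℂ) (v : b → ℂ) :
    inner ℂ (toLp 2 ψ) (toLp 2 (tp u v)) =
      inner ℂ (toLp 2 (star u ᵥ* of (Function.curry ψ))) (toLp 2 v) := by
  simp only [EuclideanSpace.inner_toLp_toLp, star_vecMul, star_star]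
  simp only [dotProduct, mulVec, tp, Fintype.sum_prod_type, Finset.mul_sum, conjTranspose_apply,
    of_apply, Function.curry_apply, Pi.star_apply]
  rw [Finset.sum_comm]
  exact Fintype.sum_congr _ _ fun j => Fintype.sum_congr _ _ fun i => by ring

lemma norm_toLp_tp (u : a → ℂ) (v : b → ℂ) :
    ‖toLp 2 (tp u v)‖ = ‖toLp 2 u‖ * ‖toLp 2 v‖ := by
  rw [← sq_eq_sq₀ (norm_nonneg _) (by positivity), mul_pow]
  simp only [EuclideanSpace.norm_sq_eq, tp, Fintype.sum_prod_type, norm_mul,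
    mul_pow, Finset.sum_mul_sum]

theorem norm_inner_toLp_tp_sq_le_lmax (ψ : a × b → ℂ) (u : a → ℂ) (v : b → ℂ) :
    ‖inner ℂ (toLp 2 ψ) (toLp 2 (tp u v))‖ ^ 2 ≤
      ‖toLp 2 (tp u v)‖ ^ 2 * lmax (ptrace₂ (proj ψ)) := by
  set F := star u ᵥ* of (Function.curry ψ)
  calc ‖inner ℂ (toLp 2 ψ) (toLp 2 (tp u v))‖ ^ 2
      = ‖inner ℂ (toLp 2 F) (toLp 2 v)‖ ^ 2 := by rw [inner_toLp_tp]
    _ ≤ (‖toLp 2 F‖ * ‖toLp 2 v‖) ^ 2 := by gcongr; exact norm_inner_le_norm _ _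
    _ = (star u ⬝ᵥ ptrace₂ (proj ψ) *ᵥ u).re * ‖toLp 2 v‖ ^ 2 := by
      rw [star_dotProduct_ptrace₂_proj_mulVec, Complex.ofReal_re, mul_pow]
    _ ≤ ‖toLp 2 u‖ ^ 2 * lmax (ptrace₂ (proj ψ)) * ‖toLp 2 v‖ ^ 2 := by
      gcongr; exact re_star_dotProduct_mulVec_le_lmax _ u
    _ = ‖toLp 2 (tp u v)‖ ^ 2 * lmax (ptrace₂ (proj ψ)) := by rw [norm_toLp_tp]; ring

end Bipartite

lemma orthonormal_toLp {ι m : Type*} [Fintype m] {ψ : ι → m → ℂ}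
    (hunit : ∀ i, ∑ p, Complex.normSq (ψ i p) = 1)
    (horth : ∀ i j, i ≠ j → ∑ p, star (ψ i p) * ψ j p = 0) :
    Orthonormal ℂ fun i => toLp 2 (ψ i) := by
  refine ⟨fun i => ?_, fun i j hij => ?_⟩
  · rw [← pow_eq_one_iff_of_nonneg (norm_nonneg _) two_ne_zero, ← sum_normSq_eq_norm_toLp_sq]
    exact hunit i
  · exact (dotProduct_comm _ _).trans (horth i j hij)

/-- If `ψ₁, …, ψ_k` are pairwise orthogonal unit vectors with
`Σᵢ G(ψᵢ) − (k−1) > 0`, where `G(ψᵢ) = 1 −` (largest squared Schmidt coefficient of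
`ψᵢ`), then the subspace they span is completely entangled. -/
theorem stmt15 {a b : Type*} [Fintype a] [Fintype b] (k : ℕ)
    (ψ : Fin k → (a × b → ℂ))
    (hunit : ∀ i, ∑ p, Complex.normSq (ψ i p) = 1)
    (horth : ∀ i j, i ≠ j → ∑ p, star (ψ i p) * ψ j p = 0)
    (hG : (∑ i, (1 - lmax (ptrace₂ (proj (ψ i))))) - (k - 1 : ℝ) > 0) :
    ∀ χ ∈ Submodule.span ℂ (Set.range ψ), χ ≠ 0 → ¬ IsProdVec χ := by
  rintro χ hχ hχ0 ⟨u, v, rfl⟩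
  set x := toLp 2 (tp u v)
  have hx : x ∈ Submodule.span ℂ (Set.range fun i => toLp 2 (ψ i)) := by
    have := Submodule.apply_mem_span_image_of_mem_span
      (WithLp.linearEquiv 2 ℂ (a × b → ℂ)).symm.toLinearMap hχ
    rwa [← Set.range_comp] at this
  have hpos : 0 < ‖x‖ ^ 2 := pow_pos (norm_pos_iff.2 (by simpa [x] using hχ0)) 2
  have hL : ∑ i, lmax (ptrace₂ (proj (ψ i))) < 1 := by
    simp only [Finset.sum_sub_distrib, Finset.sum_const, Finset.card_univ, Fintype.card_fin,
      nsmul_eq_mul, mul_one] at hG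
    linarith
  have : ‖x‖ ^ 2 < ‖x‖ ^ 2 := calc
    ‖x‖ ^ 2 = ∑ i, ‖inner ℂ (toLp 2 (ψ i)) x‖ ^ 2 :=
      (orthonormal_toLp hunit horth).norm_sq_eq_sum_norm_inner_sq hx
    _ ≤ ∑ i, ‖x‖ ^ 2 * lmax (ptrace₂ (proj (ψ i))) :=
      Finset.sum_le_sum fun i _ => norm_inner_toLp_tp_sq_le_lmax (ψ i) u v
    _ = ‖x‖ ^ 2 * ∑ i, lmax (ptrace₂ (proj (ψ i))) := (Finset.mul_sum ..).symm
    _ < ‖x‖ ^ 2 := mul_lt_of_lt_one_right hpos hL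
  exact lt_irrefl _ this
end

section
/- Let S ⊆ C^{d1} ⊗ C^{d2} be a subspace such that every density operator supported on S has non-positive partial transpose (NPT) across the cut 1|2. Let H be any finite-dimensional Hilbert space. Then for every density operator ρ supported on S ⊗ H (viewed in C^{d1} ⊗ (C^{d2} ⊗ H)), the partial transpose of ρ on the first factor has a negative eigenvalue. -/
/-- Partial transpose on the first tensor factor. -/
def pt1 {a b : Type*} (ρ : Matrix (a × b) (a × b) ℂ) : Matrix (a × b) (a × b) ℂ :=
  Matrix.of fun p q => ρ (q.1, p.2) (p.1, q.2)

open scoped ComplexOrder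

/-!
Tracing out `H` turns `ρ` into a density operator `σ = Tr_H ρ` supported on `S`, so `σ^{T_1}`
has a negative direction `Γ`. The partial transpose on the first factor commutes with the partial
trace over `H`, and `⟨Γ| Tr_H X |Γ⟩ = ∑ₖ ⟨Γ ⊗ eₖ| X |Γ ⊗ eₖ⟩`; hence some `Γ ⊗ eₖ` is a negative
direction of `ρ^{T_1}`.
-/

namespace Matrix

variable {a b h R : Type*}

def partialTrace [Fintype h] [AddCommMonoid R] (ρ : Matrix (a × (b × h)) (a × (b × h)) R) :
    Matrix (a × b) (a × b) R :=
  of fun x y => ∑ k, ρ (x.1, (x.2, k)) (y.1, (y.2, k))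

def sliceAt [Semiring R] (k : h) : (a × (b × h) → R) →ₗ[R] (a × b → R) where
  toFun w x := w (x.1, (x.2, k))
  map_add' _ _ := rfl
  map_smul' _ _ := rfl

@[simp]
lemma sliceAt_apply [Semiring R] (k : h) (w : a × (b × h) → R) (x : a × b) :
    sliceAt k w x = w (x.1, (x.2, k)) :=
  rfl

def tensorSingle [Zero R] [DecidableEq h] (k : h) (w : a × b → R) : a × (b × h) → R :=
  fun p => if p.2.2 = k then w (p.1, p.2.1) else 0

lemma star_tensorSingle [AddMonoid R] [StarAddMonoid R] [DecidableEq h] (k : h) (w : a × b → R) :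
    star (tensorSingle k w) = tensorSingle k (star w) := by
  funext p
  simp [tensorSingle, apply_ite (star : R → R)]

lemma conjTranspose_partialTrace [Fintype h] [AddCommMonoid R] [StarAddMonoid R]
    (ρ : Matrix (a × (b × h)) (a × (b × h)) R) : (partialTrace ρ)ᴴ = partialTrace ρᴴ := by
  ext x y
  simp [partialTrace, star_sum]

lemma trace_partialTrace [Fintype a] [Fintype b] [Fintype h] [AddCommMonoid R]
    (ρ : Matrix (a × (b × h)) (a × (b × h)) R) : trace (partialTrace ρ) = trace ρ := by
  simp [trace, partialTrace, Fintype.sum_prod_type]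

section Semiring

variable [Fintype a] [Fintype b] [Fintype h] [DecidableEq h] [Semiring R]

lemma tensorSingle_dotProduct (k : h) (v : a × b → R) (u : a × (b × h) → R) :
    tensorSingle k v ⬝ᵥ u = v ⬝ᵥ sliceAt k u := by
  simp [tensorSingle, sliceAt, dotProduct, Fintype.sum_prod_type]

lemma dotProduct_tensorSingle (k : h) (u : a × (b × h) → R) (v : a × b → R) :
    u ⬝ᵥ tensorSingle k v = sliceAt k u ⬝ᵥ v := by
  simp [tensorSingle, sliceAt, dotProduct, Fintype.sum_prod_type]

lemma partialTrace_mulVec (ρ : Matrix (a × (b × h)) (a × (b × h)) R) (v : a × b → R) :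
    partialTrace ρ *ᵥ v = ∑ k : h, sliceAt k (ρ *ᵥ tensorSingle k v) := by
  funext x
  have hrow : (fun y => partialTrace ρ x y) = ∑ k : h, sliceAt k (ρ (x.1, (x.2, k))) := by
    funext y
    simp [partialTrace]
  rw [mulVec, hrow, sum_dotProduct, Finset.sum_apply]
  refine Finset.sum_congr rfl fun k _ => ?_
  rw [sliceAt_apply, mulVec, dotProduct_tensorSingle]

lemma star_dotProduct_partialTrace_mulVec [StarRing R]
    (ρ : Matrix (a × (b × h)) (a × (b × h)) R) (w : a × b → R) :
    star w ⬝ᵥ (partialTrace ρ *ᵥ w) =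
      ∑ k : h, star (tensorSingle k w) ⬝ᵥ (ρ *ᵥ tensorSingle k w) := by
  simp only [partialTrace_mulVec, dotProduct_sum, star_tensorSingle, tensorSingle_dotProduct]

end Semiring

lemma PosSemidef.partialTrace [Fintype a] [Fintype b] [Fintype h] [Ring R] [PartialOrder R]
    [StarRing R] [IsOrderedAddMonoid R] {ρ : Matrix (a × (b × h)) (a × (b × h)) R}
    (hρ : ρ.PosSemidef) : (partialTrace ρ).PosSemidef := by
  classical
  refine .of_dotProduct_mulVec_nonneg ?_ fun w => ?_
  · rw [IsHermitian, conjTranspose_partialTrace, hρ.isHermitian.eq]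
  · rw [star_dotProduct_partialTrace_mulVec]
    exact Finset.sum_nonneg fun k _ => hρ.dotProduct_mulVec_nonneg _

def tensorSpan [CommSemiring R] (S : Submodule R (a × b → R)) (h : Type*) :
    Submodule R (a × (b × h) → R) :=
  Submodule.span R {w | ∃ s ∈ S, ∃ u : h → R, w = fun p => s (p.1, p.2.1) * u p.2.2}

lemma sliceAt_mem_of_mem_tensorSpan [CommSemiring R] {S : Submodule R (a × b → R)} (k : h)
    {w : a × (b × h) → R} (hw : w ∈ tensorSpan S h) : sliceAt k w ∈ S := by
  refine (Submodule.span_le (p := S.comap (sliceAt k))).mpr ?_ hw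
  rintro _ ⟨s, hs, u, rfl⟩
  have hslice : sliceAt k (fun p => s (p.1, p.2.1) * u p.2.2) = u k • s := by
    funext x
    simp [mul_comm]
  simpa [hslice] using S.smul_mem (u k) hs

lemma partialTrace_mulVec_mem [Fintype a] [Fintype b] [Fintype h] [CommSemiring R]
    {S : Submodule R (a × b → R)} {ρ : Matrix (a × (b × h)) (a × (b × h)) R}
    (hρ : ∀ v, ρ *ᵥ v ∈ tensorSpan S h) (v : a × b → R) : partialTrace ρ *ᵥ v ∈ S := by
  classical
  rw [partialTrace_mulVec]
  exact S.sum_mem fun k _ => sliceAt_mem_of_mem_tensorSpan k (hρ _)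

end Matrix

open Matrix

lemma pt1_partialTrace {a b h : Type*} [Fintype h] (ρ : Matrix (a × (b × h)) (a × (b × h)) ℂ) :
    pt1 (partialTrace ρ) = partialTrace (pt1 ρ) :=
  rfl

/-- If every density operator supported on `S ⊆ ℂ^{d1} ⊗ ℂ^{d2}` is NPT across the cut
`1|2`, then for any finite-dimensional `H`, every density operator supported on
`S ⊗ H`, viewed in `ℂ^{d1} ⊗ (ℂ^{d2} ⊗ H)`, has a partial transpose (on the first
factor) with a negative eigenvalue. -/
theorem stmt17 (d1 d2 : ℕ) {h : Type*} [Fintype h]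
    (S : Submodule ℂ (Fin d1 × Fin d2 → ℂ))
    (hS : ∀ σ : Matrix (Fin d1 × Fin d2) (Fin d1 × Fin d2) ℂ,
      σ.PosSemidef → σ.trace = 1 → (∀ v, σ.mulVec v ∈ S) →
      ∃ Γ : Fin d1 × Fin d2 → ℂ,
        (dotProduct (star Γ) ((pt1 σ).mulVec Γ)).re < 0) :
    ∀ ρ : Matrix (Fin d1 × (Fin d2 × h)) (Fin d1 × (Fin d2 × h)) ℂ,
      ρ.PosSemidef → ρ.trace = 1 →
      (∀ v, ρ.mulVec v ∈ Submodule.span ℂ {w : Fin d1 × (Fin d2 × h) → ℂ |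
        ∃ s ∈ S, ∃ u : h → ℂ, w = fun p => s (p.1, p.2.1) * u p.2.2}) →
      ∃ Γ : Fin d1 × (Fin d2 × h) → ℂ,
        (dotProduct (star Γ) ((pt1 ρ).mulVec Γ)).re < 0 := by
  classical
  intro ρ hρ htr hsupp
  obtain ⟨Γ, hΓ⟩ := hS (partialTrace ρ) hρ.partialTrace (by rw [trace_partialTrace, htr])
    (partialTrace_mulVec_mem hsupp)
  rw [pt1_partialTrace, star_dotProduct_partialTrace_mulVec, Complex.re_sum] at hΓ
  obtain ⟨k, -, hk⟩ := Finset.exists_lt_of_sum_lt (hΓ.trans_eq Finset.sum_const_zero.symm)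
  exact ⟨tensorSingle k Γ, hk⟩
end

section
/- Let ψ_1, …, ψ_n be entangled unit vectors in H_A ⊗ H_{B1}, and let χ_1, …, χ_n be mutually orthogonal unit vectors spanning a completely entangled subspace of H_{B2} ⊗ H_C. Then every nonzero vector in the span of {ψ_i ⊗ χ_i : 1 ≤ i ≤ n}, viewed inside H_A ⊗ (H_{B1} ⊗ H_{B2}) ⊗ H_C, is entangled across the bipartition A | (B1B2)C. -/
/-- Let `ψ₁, …, ψₙ` be entangled unit vectors in `H_A ⊗ H_{B1}` and `χ₁, …, χₙ`
mutually orthogonal unit vectors spanning a completely entangled subspace of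
`H_{B2} ⊗ H_C`. Then every nonzero vector in the span of `{ψᵢ ⊗ χᵢ}`, viewed inside
`H_A ⊗ ((H_{B1} ⊗ H_{B2}) ⊗ H_C)`, is entangled across the cut `A | (B1B2)C`. -/
theorem stmt18 {a b1 b2 c : Type*} [Fintype a] [Fintype b1] [Fintype b2] [Fintype c]
    (n : ℕ) (ψ : Fin n → (a × b1 → ℂ)) (χ : Fin n → (b2 × c → ℂ))
    (hψu : ∀ i, ∑ p, Complex.normSq (ψ i p) = 1)
    (hψe : ∀ i, ¬ IsProdVec (ψ i))
    (hχu : ∀ i, ∑ p, Complex.normSq (χ i p) = 1)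
    (hχo : ∀ i j, i ≠ j → ∑ p, star (χ i p) * χ j p = 0)
    (hχces : ∀ g ∈ Submodule.span ℂ (Set.range χ), g ≠ 0 → ¬ IsProdVec g) :
    ∀ w ∈ Submodule.span ℂ (Set.range fun i =>
        (fun p : a × ((b1 × b2) × c) => ψ i (p.1, p.2.1.1) * χ i (p.2.1.2, p.2.2))),
      w ≠ 0 → ¬ IsProdVec w := by
  intro w hw hw0 hprod
  obtain ⟨u, v, huv⟩ := hprod
  subst huv
  obtain ⟨cf, hc⟩ := (Submodule.mem_span_range_iff_exists_fun ℂ).mp hw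
  have hsum : ∀ p : a × ((b1 × b2) × c),
      tp u v p = ∑ i, cf i * (ψ i (p.1, p.2.1.1) * χ i (p.2.1.2, p.2.2)) := by
    intro p
    rw [← hc]
    simp [Finset.sum_apply]
  have hnorm : ∀ i, (∑ q : b2 × c, star (χ i q) * χ i q) = 1 := by
    intro i
    have h1 : (∑ q : b2 × c, star (χ i q) * χ i q)
        = ((∑ q : b2 × c, Complex.normSq (χ i q) : ℝ) : ℂ) := by
      push_cast
      refine Finset.sum_congr rfl fun q _ => ?_
      rw [Complex.normSq_eq_conj_mul_self]
      rfl
    rw [h1, hχu i, Complex.ofReal_one]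
  -- find k with cf k ≠ 0
  by_cases hall : ∀ k, cf k = 0
  · exact hw0 (by rw [← hc]; simp [hall])
  push_neg at hall
  obtain ⟨k, hk⟩ := hall
  apply hψe k
  refine ⟨fun x => (cf k)⁻¹ * u x,
    fun y1 => ∑ q : b2 × c, star (χ k q) * v ((y1, q.1), q.2), ?_⟩
  funext p
  obtain ⟨x, y1⟩ := p
  have key : (∑ q : b2 × c, star (χ k q) * tp u v (x, ((y1, q.1), q.2)))
      = cf k * ψ k (x, y1) := by
    calc ∑ q : b2 × c, star (χ k q) * tp u v (x, ((y1, q.1), q.2))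
        = ∑ q : b2 × c, ∑ i, (cf i * ψ i (x, y1)) * (star (χ k q) * χ i q) := by
          refine Finset.sum_congr rfl fun q _ => ?_
          rw [hsum, Finset.mul_sum]
          refine Finset.sum_congr rfl fun i _ => ?_
          ring
      _ = ∑ i, (cf i * ψ i (x, y1)) * ∑ q : b2 × c, star (χ k q) * χ i q := by
          rw [Finset.sum_comm]
          simp [Finset.mul_sum]
      _ = cf k * ψ k (x, y1) := by
          rw [Finset.sum_eq_single k]
          · rw [hnorm k, mul_one]
          · intro i _ hik
            rw [hχo k i (Ne.symm hik), mul_zero]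
          · intro h; exact absurd (Finset.mem_univ k) h
  have key2 : (∑ q : b2 × c, star (χ k q) * tp u v (x, ((y1, q.1), q.2)))
      = u x * ∑ q : b2 × c, star (χ k q) * v ((y1, q.1), q.2) := by
    rw [Finset.mul_sum]
    refine Finset.sum_congr rfl fun q _ => ?_
    simp [tp]
    ring
  rw [key] at key2
  have h3 : ((cf k)⁻¹ * u x) * (∑ q : b2 × c, star (χ k q) * v ((y1, q.1), q.2))
      = (cf k)⁻¹ * (cf k * ψ k (x, y1)) := by rw [key2]; ring
  simp only [tp]
  rw [h3, inv_mul_cancel_left₀ hk]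
end
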